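/- arXiv:2403.01887 — 4 statements merged into one kernel-verified Lean document; each statement's English description precedes it below -/
import Mathlib

section
/- Assume the setting below (case mindeg_q(G)=2t) with q > 2. Let F_C^h(X,Y,Z) be the homogenization of F_C(X,Y) to total degree q^k + q^{2t} (using the variable Z), and for ξ in the algebraic closure of F_q with ξ^{q^{k−2t}} = ξ set f_ξ(Y,Z) := F_C^h(1, Y+ξ, Z). Define the multiplicity m_{P_ξ}(C) as the least integer d such that the homogeneous component of degree d of f_ξ is nonzero. Then m_{P_ξ}(C) = q^{2t} − q^t or m_{P_ξ}(C) = q^{2t}; moreover m_{P_ξ}(C) = q^{2t} if and only if ξ^{q^{gcd(k,t)}} = ξ. -/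
open MvPolynomial

noncomputable section

/-- `F(x) = x + δ x^(q^(2t))` (value at `x`). -/
def Fval (q t : ℕ) {Ω : Type*} [Field Ω] (δ x : Ω) : Ω := x + δ * x ^ q ^ (2 * t)

/-- `G(x) = x^(q^(2t)) + ∑_{i=2t+1}^{k-1} c_i x^(q^i) + C x^(q^k)` (value at `x`). -/
def Gval (q t k : ℕ) {Ω : Type*} [Field Ω] (c : ℕ → Ω) (Cc x : Ω) : Ω :=
  x ^ q ^ (2 * t) + (∑ i ∈ Finset.Ico (2 * t + 1) k, c i * x ^ q ^ i) + Cc * x ^ q ^ k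

/-- `F` applied to a bivariate polynomial. -/
def FP (q t : ℕ) {Ω : Type*} [Field Ω] (δ : Ω) (u : MvPolynomial (Fin 2) Ω) :
    MvPolynomial (Fin 2) Ω := u + C δ * u ^ q ^ (2 * t)

/-- `G` applied to a bivariate polynomial. -/
def GP (q t k : ℕ) {Ω : Type*} [Field Ω] (c : ℕ → Ω) (Cc : Ω) (u : MvPolynomial (Fin 2) Ω) :
    MvPolynomial (Fin 2) Ω :=
  u ^ q ^ (2 * t) + (∑ i ∈ Finset.Ico (2 * t + 1) k, C (c i) * u ^ q ^ i) + C Cc * u ^ q ^ k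

/-- The affine equation `F_C(X,Y)` of the curve `C`. -/
def FC (q t k : ℕ) {Ω : Type*} [Field Ω] (δ : Ω) (c : ℕ → Ω) (Cc l : Ω) :
    MvPolynomial (Fin 2) Ω :=
  Matrix.det !![(X 0) ^ q ^ t, FP q t δ (X 0), GP q t k c Cc (X 0);
                (X 1) ^ q ^ t, FP q t δ (X 1), GP q t k c Cc (X 1);
                C (l ^ q ^ t), C (Fval q t δ l), C (Gval q t k c Cc l)]

/-- `f_ξ(Y,Z) := F_C^h(1, Y+ξ, Z)`. -/
def fxi {Ω : Type*} [Field Ω] (FCh : MvPolynomial (Fin 3) Ω) (ξ : Ω) :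
    MvPolynomial (Fin 2) Ω :=
  aeval ![1, X 0 + C ξ, X 1] FCh

/-- The multiplicity: the least `d` such that the degree-`d` homogeneous component is
nonzero. -/
def multAt {Ω : Type*} [Field Ω] (f : MvPolynomial (Fin 2) Ω) : ℕ :=
  sInf {d : ℕ | homogeneousComponent d f ≠ 0}

/-!
Since a ternary form is determined by its dehomogenization, `F_C^h` is the determinant of the
matrix defining `F_C` with each column homogenized to the degree of its entries and the constant
row weighted accordingly. Substitute `(1, Y + ξ, Z)` and work modulo `(Y, Z)^(q^(2t)+1)`: every
`Z^e` with `e > q^(2t)` dies and `(Y + ξ)^(q^j) = Y^(q^j) + ξ^(q^j)`, so the determinant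
collapses to
`C F(λ) (ξ^(q^t) - ξ^(q^(2t))) Z^(q^(2t)-q^t) + C λ^(q^t) (ξ^(q^(2t)) - ξ) Z^(q^(2t)-1) + T`
with `T` a nonzero form of degree `q^(2t)`. The first coefficient vanishes exactly when
`ξ^(q^t) = ξ`, and then so does the second. For `ξ ∈ 𝔽_{q^(k-2t)}`, `ξ ∈ 𝔽_{q^t}` iff
`ξ ∈ 𝔽_{q^gcd(k,t)}`.
-/

namespace MvPolynomial

section Homogeneous

variable {σ R : Type*} [CommRing R]

theorem IsHomogeneous.mem_pow_idealOfVars {P : MvPolynomial σ R} {n : ℕ}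
    (hP : P.IsHomogeneous n) : P ∈ idealOfVars σ R ^ n :=
  (mem_pow_idealOfVars_iff n P).2 fun _ hd => (hP.degree_eq_sum_deg_support hd).le

theorem homogeneousComponent_eq_of_sub_mem_pow_idealOfVars {f g : MvPolynomial σ R} {n d : ℕ}
    (h : f - g ∈ idealOfVars σ R ^ n) (hd : d < n) :
    homogeneousComponent d f = homogeneousComponent d g := by
  rw [← sub_eq_zero, ← map_sub]
  ext m
  rw [coeff_homogeneousComponent, coeff_zero]
  split_ifs with hm
  · exact (mem_pow_idealOfVars_iff' n _).1 h m (hm ▸ hd)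
  · rfl

theorem IsHomogeneous.aeval_smul {A : Type*} [CommRing A] [Algebra R A]
    {P : MvPolynomial σ R} {n : ℕ} (hP : P.IsHomogeneous n) (z : A) (g : σ → A) :
    MvPolynomial.aeval (z • g) P = z ^ n * MvPolynomial.aeval g P := by
  conv_lhs => rw [P.as_sum]
  conv_rhs => rw [P.as_sum]
  simp only [map_sum, aeval_monomial, Finset.mul_sum]
  refine Finset.sum_congr rfl fun d hd => ?_
  simp only [Pi.smul_apply, smul_eq_mul, mul_pow, Finsupp.prod_mul]
  rw [Finsupp.prod, Finset.prod_pow_eq_pow_sum, ← hP.degree_eq_sum_deg_support hd]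
  ring

theorem isHomogeneous_det {ι : Type*} [Fintype ι] [DecidableEq ι]
    (M : Matrix ι ι (MvPolynomial σ R)) (a c : ι → ℕ)
    (hM : ∀ i j, (M i j).IsHomogeneous (a i + c j)) :
    M.det.IsHomogeneous (∑ i, a i + ∑ j, c j) := by
  rw [Matrix.det_apply]
  refine IsHomogeneous.sum _ _ _ fun e _ => ?_
  have hprod : (∏ i, M (e i) i).IsHomogeneous (∑ i, (a (e i) + c i)) :=
    IsHomogeneous.prod _ _ _ fun i _ => hM (e i) i
  rw [Finset.sum_add_distrib, Equiv.sum_comp e a] at hprod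
  rcases Int.units_eq_one_or (Equiv.Perm.sign e) with h | h <;> rw [h]
  · simpa using hprod
  · simpa using hprod.neg

theorem IsHomogeneous.eq_of_aeval_eq [IsDomain R] {P Q : MvPolynomial (Fin 3) R} {n : ℕ}
    (hP : P.IsHomogeneous n) (hQ : Q.IsHomogeneous n)
    (h : MvPolynomial.aeval ![(X 0 : MvPolynomial (Fin 2) R), X 1, 1] P =
      MvPolynomial.aeval ![X 0, X 1, 1] Q) :
    P = Q := by
  let L := FractionRing (MvPolynomial (Fin 3) R)
  let ι := algebraMap (MvPolynomial (Fin 3) R) L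
  have hz : ι (X 2) ≠ 0 :=
    (map_ne_zero_iff _ (IsFractionRing.injective _ L)).2 (X_ne_zero 2)
  let g : Fin 2 → L := ![ι (X 0) / ι (X 2), ι (X 1) / ι (X 2)]
  let ρ : Fin 3 → MvPolynomial (Fin 2) R := ![X 0, X 1, 1]
  have key : ∀ S : MvPolynomial (Fin 3) R, S.IsHomogeneous n →
      ι S = ι (X 2) ^ n * MvPolynomial.aeval g (MvPolynomial.aeval ρ S) := by
    intro S hS
    have hX : (fun i => ι (X i)) = ι (X 2) • fun i => MvPolynomial.aeval g (ρ i) := by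
      funext i
      fin_cases i <;> simp [g, ρ, hz, mul_div_cancel₀]
    rw [comp_aeval_apply, ← hS.aeval_smul, ← hX]
    conv_lhs => rw [← aeval_X_left_apply S]
    exact comp_aeval_apply X (IsScalarTower.toAlgHom R _ L) S
  exact IsFractionRing.injective _ L (by rw [key P hP, key Q hQ, h])

end Homogeneous

end MvPolynomial

theorem multAt_eq_of_sub_mem_pow_idealOfVars {Ω : Type*} [Field Ω]
    {f h : MvPolynomial (Fin 2) Ω} {m : ℕ} (hh : h.IsHomogeneous m) (h0 : h ≠ 0)
    (hfh : f - h ∈ idealOfVars (Fin 2) Ω ^ (m + 1)) : multAt f = m := by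
  have hcomp : ∀ d ≤ m, homogeneousComponent d f = if d = m then h else 0 := fun d hd => by
    rw [homogeneousComponent_eq_of_sub_mem_pow_idealOfVars hfh (Nat.lt_succ_of_le hd),
      homogeneousComponent_of_mem ((mem_homogeneousSubmodule _ _).2 hh)]
  have hm : m ∈ {d | homogeneousComponent d f ≠ 0} := by simp [hcomp m le_rfl, h0]
  refine le_antisymm (Nat.sInf_le hm) (le_csInf ⟨m, hm⟩ fun d hd => ?_)
  by_contra! hlt
  exact hd (by rw [hcomp d hlt.le, if_neg hlt.ne])

theorem pow_lt_pow_sub_pow {q i j k : ℕ} (hq : 3 ≤ q) (hi : i < k) (hj : j < k) :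
    q ^ j < q ^ k - q ^ i := by
  have hqi : q ^ i ≤ q ^ (k - 1) := Nat.pow_le_pow_right (by omega) (by omega)
  have hqj : q ^ j ≤ q ^ (k - 1) := Nat.pow_le_pow_right (by omega) (by omega)
  have hk : q ^ k = q * q ^ (k - 1) := by rw [← pow_succ']; congr 1; omega
  have hpos : 0 < q ^ (k - 1) := Nat.pow_pos (by omega)
  have : 3 * q ^ (k - 1) ≤ q * q ^ (k - 1) := Nat.mul_le_mul_right _ hq
  omega

section HomogenizedCurve

variable (q t k : ℕ) {Ω : Type*} [Field Ω] (δ : Ω) (c : ℕ → Ω) (Cc l : Ω)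

/-- `FHom u z = z^(q^(2t)) F(u/z)` and `GHom u z = z^(q^k) G(u/z)`. -/
def FHom {A : Type*} [CommRing A] [Algebra Ω A] (u z : A) : A :=
  u * z ^ (q ^ (2 * t) - 1) + algebraMap Ω A δ * u ^ q ^ (2 * t)

def GHom {A : Type*} [CommRing A] [Algebra Ω A] (u z : A) : A :=
  u ^ q ^ (2 * t) * z ^ (q ^ k - q ^ (2 * t))
    + ∑ i ∈ Finset.Ico (2 * t + 1) k, algebraMap Ω A (c i) * u ^ q ^ i * z ^ (q ^ k - q ^ i)
    + algebraMap Ω A Cc * u ^ q ^ k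

/-- For `(u, v, z) = (X₀, X₁, X₂)` its determinant is the homogenization of `FC`: the columns
are homogenized to the degrees `q^t`, `q^(2t)`, `q^k` of their entries, and the constant row is
weighted by `z^(deg - q^t)`, so that every term has degree `q^k + q^(2t)`. -/
def homCurveMatrix {A : Type*} [CommRing A] [Algebra Ω A] (u v z : A) :
    Matrix (Fin 3) (Fin 3) A :=
  !![u ^ q ^ t, FHom q t δ u z, GHom q t k c Cc u z;
     v ^ q ^ t, FHom q t δ v z, GHom q t k c Cc v z;
     algebraMap Ω A (l ^ q ^ t), algebraMap Ω A (Fval q t δ l) * z ^ (q ^ (2 * t) - q ^ t),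
       algebraMap Ω A (Gval q t k c Cc l) * z ^ (q ^ k - q ^ t)]

theorem AlgHom.map_det_homCurveMatrix {A B : Type*} [CommRing A] [Algebra Ω A] [CommRing B]
    [Algebra Ω B] (f : A →ₐ[Ω] B) (u v z : A) :
    f (homCurveMatrix q t k δ c Cc l u v z).det
      = (homCurveMatrix q t k δ c Cc l (f u) (f v) (f z)).det := by
  rw [AlgHom.map_det]
  congr 1
  ext i j
  fin_cases i <;> fin_cases j <;> simp [homCurveMatrix, FHom, GHom, map_sum]

theorem FC_eq_det_homCurveMatrix :
    FC q t k δ c Cc l = (homCurveMatrix q t k δ c Cc l (X 0) (X 1) 1).det := by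
  rw [FC]
  congr 1
  ext i j
  fin_cases i <;> fin_cases j <;> simp [homCurveMatrix, FHom, GHom, FP, GP, algebraMap_eq]

variable {σ : Type*}

theorem isHomogeneous_FHom (hq : 0 < q) (i j : σ) :
    (FHom q t δ (X i) (X j) : MvPolynomial σ Ω).IsHomogeneous (q ^ (2 * t)) := by
  have h1 : 1 + (q ^ (2 * t) - 1) = q ^ (2 * t) := by
    have := Nat.pow_pos (n := 2 * t) hq; omega
  refine IsHomogeneous.add ?_ ((isHomogeneous_X_pow i _).C_mul δ)
  simpa [h1] using (isHomogeneous_X _ i).mul (isHomogeneous_X_pow j (q ^ (2 * t) - 1))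

theorem isHomogeneous_GHom (hq : 0 < q) (h2tk : 2 * t ≤ k) (i j : σ) :
    (GHom q t k c Cc (X i) (X j) : MvPolynomial σ Ω).IsHomogeneous (q ^ k) := by
  have hterm : ∀ e ≤ k,
      (X i ^ q ^ e * X j ^ (q ^ k - q ^ e) : MvPolynomial σ Ω).IsHomogeneous (q ^ k) :=
    fun e he => by
    simpa [Nat.add_sub_cancel' (Nat.pow_le_pow_right hq he)] using
      (isHomogeneous_X_pow i (q ^ e)).mul (isHomogeneous_X_pow j (q ^ k - q ^ e))
  refine ((hterm _ h2tk).add (IsHomogeneous.sum _ _ _ fun e he => ?_)).add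
    ((isHomogeneous_X_pow i _).C_mul Cc)
  simpa [algebraMap_eq, mul_assoc] using (hterm e (Finset.mem_Ico.1 he).2.le).C_mul (c e)

theorem isHomogeneous_det_homCurveMatrix (hq : 0 < q) (h2tk : 2 * t ≤ k) :
    (homCurveMatrix q t k δ c Cc l (X 0) (X 1) (X 2) : Matrix (Fin 3) (Fin 3)
      (MvPolynomial (Fin 3) Ω)).det.IsHomogeneous (q ^ k + q ^ (2 * t)) := by
  have h1 : q ^ t ≤ q ^ (2 * t) := Nat.pow_le_pow_right hq (by omega)
  have h2 : q ^ (2 * t) ≤ q ^ k := Nat.pow_le_pow_right hq h2tk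
  have hdeg := isHomogeneous_det
    (homCurveMatrix q t k δ c Cc l (X 0 : MvPolynomial (Fin 3) Ω) (X 1) (X 2))
    ![q ^ t, q ^ t, 0] ![0, q ^ (2 * t) - q ^ t, q ^ k - q ^ t] fun i j => by
      fin_cases i <;> fin_cases j <;>
        simp [homCurveMatrix, Nat.add_sub_cancel' h1, Nat.add_sub_cancel' (h1.trans h2)]
      · exact isHomogeneous_X_pow _ _
      · exact isHomogeneous_FHom q t δ hq _ _
      · exact isHomogeneous_GHom q t k c Cc hq h2tk _ _
      · exact isHomogeneous_X_pow _ _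
      · exact isHomogeneous_FHom q t δ hq _ _
      · exact isHomogeneous_GHom q t k c Cc hq h2tk _ _
      · simpa using (isHomogeneous_C (Fin 3) l).pow (q ^ t)
      · exact isHomogeneous_C_mul_X_pow _ _ _
      · exact isHomogeneous_C_mul_X_pow _ _ _
  have hsum : ∑ i, ![q ^ t, q ^ t, 0] i + ∑ j, ![0, q ^ (2 * t) - q ^ t, q ^ k - q ^ t] j
      = q ^ k + q ^ (2 * t) := by
    simp [Fin.sum_univ_three]
    omega
  rwa [hsum] at hdeg

theorem fxi_eq_det_homCurveMatrix (hq : 0 < q) (h2tk : 2 * t ≤ k)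
    {FCh : MvPolynomial (Fin 3) Ω} (hhom : FCh.IsHomogeneous (q ^ k + q ^ (2 * t)))
    (hdeh : aeval ![X 0, X 1, 1] FCh = FC q t k δ c Cc l) (ξ : Ω) :
    fxi FCh ξ = (homCurveMatrix q t k δ c Cc l 1 (X 0 + C ξ) (X 1)).det := by
  have hFCh : FCh = (homCurveMatrix q t k δ c Cc l (X 0) (X 1) (X 2)).det := by
    refine hhom.eq_of_aeval_eq (isHomogeneous_det_homCurveMatrix q t k δ c Cc l hq h2tk) ?_
    rw [hdeh, AlgHom.map_det_homCurveMatrix, FC_eq_det_homCurveMatrix]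
    simp
  rw [fxi, hFCh, AlgHom.map_det_homCurveMatrix]
  simp

theorem GHom_eq_of_pow_eq_zero {A : Type*} [CommRing A] [Algebra Ω A] (hq3 : 3 ≤ q)
    (h2tk : 2 * t < k) {z : A} (hz : ∀ e, q ^ (2 * t) < e → z ^ e = 0) (u : A) :
    GHom q t k c Cc u z = algebraMap Ω A Cc * u ^ q ^ k := by
  have hsum : ∑ i ∈ Finset.Ico (2 * t + 1) k,
      algebraMap Ω A (c i) * u ^ q ^ i * z ^ (q ^ k - q ^ i) = 0 :=
    Finset.sum_eq_zero fun i hi => by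
      rw [hz _ (pow_lt_pow_sub_pow hq3 (Finset.mem_Ico.1 hi).2 h2tk), mul_zero]
  rw [GHom, hsum, hz _ (pow_lt_pow_sub_pow hq3 h2tk h2tk), mul_zero, zero_add, zero_add]

def tangentConeForm : MvPolynomial (Fin 2) Ω :=
  C (Cc * Fval q t δ l) * X 0 ^ q ^ t * X 1 ^ (q ^ (2 * t) - q ^ t)
    - C (Cc * l ^ q ^ t) * X 0 * X 1 ^ (q ^ (2 * t) - 1)
    - C (Cc * δ * l ^ q ^ t) * X 0 ^ q ^ (2 * t)

theorem det_homCurveMatrix_sub_mem_pow_idealOfVars (p m : ℕ) [Fact p.Prime] [CharP Ω p]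
    (hq : q = p ^ m) (hq3 : 3 ≤ q) (h2tk : 2 * t < k) {ξ : Ω}
    (hξk : ξ ^ q ^ k = ξ ^ q ^ (2 * t)) :
    (homCurveMatrix q t k δ c Cc l 1 (X 0 + C ξ) (X 1)).det
      - (C (Cc * Fval q t δ l * (ξ ^ q ^ t - ξ ^ q ^ (2 * t))) * X 1 ^ (q ^ (2 * t) - q ^ t)
        + C (Cc * l ^ q ^ t * (ξ ^ q ^ (2 * t) - ξ)) * X 1 ^ (q ^ (2 * t) - 1)
        + tangentConeForm q t δ Cc l)
      ∈ idealOfVars (Fin 2) Ω ^ (q ^ (2 * t) + 1) := by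
  set I := idealOfVars (Fin 2) Ω ^ (q ^ (2 * t) + 1)
  rw [← Ideal.Quotient.eq, ← Ideal.Quotient.mkₐ_eq_mk Ω, AlgHom.map_det_homCurveMatrix]
  set π := Ideal.Quotient.mkₐ Ω I
  have hvanish : ∀ i e, q ^ (2 * t) < e → π (X i) ^ e = 0 := fun i e he => by
    rw [← map_pow, Ideal.Quotient.mkₐ_eq_mk, Ideal.Quotient.eq_zero_iff_mem]
    exact Ideal.pow_le_pow_right he (isHomogeneous_X_pow i e).mem_pow_idealOfVars
  have hfrob : ∀ j, π (X 0 + C ξ) ^ q ^ j = π (X 0) ^ q ^ j + algebraMap Ω _ (ξ ^ q ^ j) :=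
    fun j => by
      rw [← map_pow, hq, ← pow_mul, add_pow_char_pow, map_add, map_pow, ← map_pow C,
        ← algebraMap_eq, AlgHom.commutes]
  have hC : ∀ a, π (C a) = algebraMap Ω _ a := fun a => π.commutes a
  have hG := GHom_eq_of_pow_eq_zero q t k c Cc hq3 h2tk (hvanish 1)
  have hG1 : GHom q t k c Cc (π 1) (π (X 1)) = algebraMap Ω _ Cc := by simp [hG]
  have hGv :
      GHom q t k c Cc (π (X 0 + C ξ)) (π (X 1)) = algebraMap Ω _ (Cc * ξ ^ q ^ (2 * t)) := by
    rw [hG, hfrob k, hvanish 0 _ (Nat.pow_lt_pow_right (by omega) h2tk), hξk, zero_add, map_mul]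
  have hR3 : algebraMap Ω _ (Gval q t k c Cc l) * π (X 1) ^ (q ^ k - q ^ t) = 0 := by
    rw [hvanish 1 _ (pow_lt_pow_sub_pow hq3 (by omega) h2tk), mul_zero]
  rw [Matrix.det_fin_three]
  simp only [homCurveMatrix, Matrix.of_apply, Matrix.cons_val', Matrix.cons_val_zero,
    Matrix.cons_val_one, Matrix.head_cons, Matrix.cons_val_two, Matrix.tail_cons,
    Matrix.empty_val', Matrix.cons_val_fin_one, Matrix.head_fin_const, hG1, hGv, hR3]
  simp only [FHom, hfrob]
  simp only [tangentConeForm, map_one, one_pow, map_add, map_sub, map_mul, map_pow, hC]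
  ring

theorem isHomogeneous_tangentConeForm (hq : 0 < q) :
    (tangentConeForm q t δ Cc l).IsHomogeneous (q ^ (2 * t)) := by
  have h1 : q ^ t ≤ q ^ (2 * t) := Nat.pow_le_pow_right hq (by omega)
  have h2 : 0 < q ^ (2 * t) := Nat.pow_pos hq
  refine ((IsHomogeneous.sub ?_ ?_).sub ((isHomogeneous_X_pow 0 _).C_mul _))
  · simpa [mul_assoc, Nat.add_sub_cancel' h1] using
      ((isHomogeneous_X_pow 0 (q ^ t)).mul (isHomogeneous_X_pow 1 (q ^ (2 * t) - q ^ t))).C_mul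
        (Cc * Fval q t δ l)
  · simpa [mul_assoc, Nat.add_sub_cancel' h2] using
      ((isHomogeneous_X Ω 0).mul (isHomogeneous_X_pow 1 (q ^ (2 * t) - 1))).C_mul (Cc * l ^ q ^ t)

theorem tangentConeForm_ne_zero (hq : 2 ≤ q) (ht : 0 < t) (hCl : Cc * l ^ q ^ t ≠ 0) :
    tangentConeForm q t δ Cc l ≠ 0 := by
  have h1 : q ^ t ≠ 1 := (Nat.one_lt_pow ht.ne' (by omega)).ne'
  have h2 : q ^ (2 * t) ≠ 1 := (Nat.one_lt_pow (by omega) (by omega)).ne'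
  intro h0
  -- set `Z = 1` and compare coefficients of `Y`
  have := congrArg (fun P => (aeval ![(Polynomial.X : Polynomial Ω), 1] P).coeff 1) h0
  simp [tangentConeForm, mul_assoc, Polynomial.coeff_C_mul, Polynomial.coeff_X_pow, h1.symm] at this
  rw [← Polynomial.C_pow, Polynomial.coeff_C_zero, Polynomial.coeff_C_mul_X_pow,
    if_neg h2.symm] at this
  exact hCl (by simpa using this)

theorem multAt_det_homCurveMatrix_of_pow_ne (p m : ℕ) [Fact p.Prime] [CharP Ω p]
    (hq : q = p ^ m) (hq3 : 3 ≤ q) (ht : 0 < t) (h2tk : 2 * t < k) (hF : Fval q t δ l ≠ 0)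
    (hCc : Cc ≠ 0) {ξ : Ω} (hξk : ξ ^ q ^ k = ξ ^ q ^ (2 * t)) (hξt : ξ ^ q ^ t ≠ ξ) :
    multAt (homCurveMatrix q t k δ c Cc l 1 (X 0 + C ξ) (X 1)).det = q ^ (2 * t) - q ^ t := by
  have hξ2t : ξ ^ q ^ t ≠ ξ ^ q ^ (2 * t) := fun h => hξt <|
    iterateFrobenius_inj Ω p (m * t) <| by
      rw [iterateFrobenius_def, iterateFrobenius_def, pow_mul, ← hq, ← pow_mul, ← pow_add,
        ← two_mul, h]
  have ha : Cc * Fval q t δ l * (ξ ^ q ^ t - ξ ^ q ^ (2 * t)) ≠ 0 :=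
    mul_ne_zero (mul_ne_zero hCc hF) (sub_ne_zero.2 hξ2t)
  have hlead := isHomogeneous_C_mul_X_pow (Cc * Fval q t δ l * (ξ ^ q ^ t - ξ ^ q ^ (2 * t)))
    (1 : Fin 2) (q ^ (2 * t) - q ^ t)
  have h1 : 1 < q ^ t := Nat.one_lt_pow ht.ne' (by omega)
  have h2 : q ^ t ≤ q ^ (2 * t) := Nat.pow_le_pow_right (by omega) (by omega)
  refine multAt_eq_of_sub_mem_pow_idealOfVars hlead
    (mul_ne_zero (mt C_eq_zero.1 ha) (pow_ne_zero _ (X_ne_zero _))) ?_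
  have hcong := det_homCurveMatrix_sub_mem_pow_idealOfVars q t k δ c Cc l p m hq hq3 h2tk hξk
  set D := (homCurveMatrix q t k δ c Cc l 1 (X 0 + C ξ : MvPolynomial (Fin 2) Ω) (X 1)).det
  set B := C (Cc * l ^ q ^ t * (ξ ^ q ^ (2 * t) - ξ)) * X (1 : Fin 2) ^ (q ^ (2 * t) - 1)
  set T := tangentConeForm q t δ Cc l
  rw [show ∀ L, D - L = (D - (L + B + T)) + (B + T) from fun L => by ring]
  refine add_mem (Ideal.pow_le_pow_right (by omega) hcong) (add_mem ?_ ?_)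
  · exact Ideal.pow_le_pow_right (by omega) (isHomogeneous_C_mul_X_pow _ _ _).mem_pow_idealOfVars
  · exact Ideal.pow_le_pow_right (by omega)
      (isHomogeneous_tangentConeForm q t δ Cc l (by omega)).mem_pow_idealOfVars

theorem multAt_det_homCurveMatrix_of_pow_eq (p m : ℕ) [Fact p.Prime] [CharP Ω p]
    (hq : q = p ^ m) (hq3 : 3 ≤ q) (ht : 0 < t) (h2tk : 2 * t < k) (hCl : Cc * l ^ q ^ t ≠ 0)
    {ξ : Ω} (hξk : ξ ^ q ^ k = ξ ^ q ^ (2 * t)) (hξt : ξ ^ q ^ t = ξ) :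
    multAt (homCurveMatrix q t k δ c Cc l 1 (X 0 + C ξ) (X 1)).det = q ^ (2 * t) := by
  have hξ2t : ξ ^ q ^ (2 * t) = ξ := by rw [two_mul, pow_add, pow_mul, hξt, hξt]
  refine multAt_eq_of_sub_mem_pow_idealOfVars
    (isHomogeneous_tangentConeForm q t δ Cc l (by omega))
    (tangentConeForm_ne_zero q t δ Cc l (by omega) ht hCl) ?_
  simpa [hξt, hξ2t] using
    det_homCurveMatrix_sub_mem_pow_idealOfVars q t k δ c Cc l p m hq hq3 h2tk hξk

end HomogenizedCurve

theorem pow_pow_gcd_eq_self_iff {M : Type*} [Monoid M] {x : M} {q k t : ℕ} (h2tk : 2 * t ≤ k)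
    (hx : x ^ q ^ (k - 2 * t) = x) : x ^ q ^ Nat.gcd k t = x ↔ x ^ q ^ t = x := by
  have hper : ∀ n, Function.IsPeriodicPt (· ^ q) n x ↔ x ^ q ^ n = x := fun n => by
    simp [Function.IsPeriodicPt, Function.IsFixedPt, pow_iterate]
  have hgcd : Nat.gcd (k - 2 * t) t = Nat.gcd k t := by
    conv_rhs => rw [← Nat.sub_add_cancel h2tk]
    exact (Nat.gcd_add_mul_right_left t (k - 2 * t) 2).symm
  simp only [← hper] at hx ⊢
  exact ⟨fun h => h.trans_dvd (Nat.gcd_dvd_right k t), fun h => hgcd ▸ hx.gcd h⟩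

theorem stmt_3_general (q t k : ℕ) (hq2 : 2 < q)
    (F0 : Type) [Field F0] [Fintype F0] (hF0 : Fintype.card F0 = q)
    (ht : 0 < t) (h2tk : 2 * t < k)
    (δ l Cc : AlgebraicClosure F0) (c : ℕ → AlgebraicClosure F0)
    (hCc : Cc ≠ 0)
    (hlq : l ^ q ≠ l)
    (hFl : Fval q t δ l ≠ 0)
    (FCh : MvPolynomial (Fin 3) (AlgebraicClosure F0))
    (hhom : FCh.IsHomogeneous (q ^ k + q ^ (2 * t)))
    (hdeh : aeval ![X 0, X 1, 1] FCh = FC q t k δ c Cc l)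
    (ξ : AlgebraicClosure F0) (hξ : ξ ^ q ^ (k - 2 * t) = ξ) :
    (multAt (fxi FCh ξ) = q ^ (2 * t) - q ^ t ∨ multAt (fxi FCh ξ) = q ^ (2 * t)) ∧
      (multAt (fxi FCh ξ) = q ^ (2 * t) ↔ ξ ^ q ^ Nat.gcd k t = ξ) := by
  obtain ⟨p, _, m, hp, hcard⟩ := FiniteField.card' F0
  have := Fact.mk hp
  have : CharP (AlgebraicClosure F0) p :=
    charP_of_injective_algebraMap (algebraMap F0 _).injective p
  have hq : q = p ^ (m : ℕ) := hF0 ▸ hcard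
  have hl : Cc * l ^ q ^ t ≠ 0 :=
    mul_ne_zero hCc (pow_ne_zero _ fun h => hlq (by rw [h, zero_pow (by omega)]))
  have hξk : ξ ^ q ^ k = ξ ^ q ^ (2 * t) := by
    rw [← Nat.sub_add_cancel h2tk.le, pow_add, pow_mul, hξ]
  rw [fxi_eq_det_homCurveMatrix q t k δ c Cc l (by omega) h2tk.le hhom hdeh,
    pow_pow_gcd_eq_self_iff h2tk.le hξ]
  by_cases hξt : ξ ^ q ^ t = ξ
  · rw [multAt_det_homCurveMatrix_of_pow_eq q t k δ c Cc l p m hq hq2 ht h2tk hl hξk hξt]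
    simp [hξt]
  · rw [multAt_det_homCurveMatrix_of_pow_ne q t k δ c Cc l p m hq hq2 ht h2tk hFl hCc hξk hξt]
    have hlt : q ^ (2 * t) - q ^ t < q ^ (2 * t) :=
      Nat.sub_lt (Nat.pow_pos (by omega)) (Nat.pow_pos (by omega))
    simp [hlt.ne, hξt]

/-- In the setting (case `mindeg_q G = 2t`) with `q > 2`: for
`ξ` in the algebraic closure of `F_q` with `ξ^(q^(k−2t)) = ξ`, the multiplicity of the
point `P_ξ = (1:ξ:0)` of `C` is `q^(2t) − q^t` or `q^(2t)`; and it is `q^(2t)` if and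
only if `ξ^(q^(gcd(k,t))) = ξ`. -/
theorem stmt_3 (q n t k : ℕ) (hq2 : 2 < q)
    (F0 : Type) [Field F0] [Fintype F0] (hF0 : Fintype.card F0 = q)
    (ht : 0 < t) (h2tk : 2 * t < k) (hkn : k < n)
    (δ l Cc : AlgebraicClosure F0) (c : ℕ → AlgebraicClosure F0)
    (hδK : δ ^ q ^ n = δ) (hlK : l ^ q ^ n = l) (hCcK : Cc ^ q ^ n = Cc)
    (hcK : ∀ i, c i ^ q ^ n = c i)
    (hnorm : δ ^ ((q ^ n - 1) / (q - 1)) ≠ 1) (hCc : Cc ≠ 0)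
    (hlq : l ^ q ≠ l)
    (hFl : Fval q t δ l ≠ 0) (hGl : Gval q t k c Cc l ≠ 0)
    (hLξ : ∀ ξ : AlgebraicClosure F0, ξ ^ q ^ (k - 2 * t) = ξ → ξ ^ q ^ (k - t) ≠ ξ →
      (ξ - ξ ^ q ^ t) ^ q ^ (k + t) * (ξ ^ q ^ (k - t) - ξ) ^ q ^ t
          * Fval q t δ l ^ (q ^ t + 1)
        + δ * (ξ ^ q ^ k - ξ) ^ (q ^ t * (q ^ t + 1)) * l ^ (q ^ t * (q ^ t + 1)) ≠ 0)
    (FCh : MvPolynomial (Fin 3) (AlgebraicClosure F0))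
    (hhom : FCh.IsHomogeneous (q ^ k + q ^ (2 * t)))
    (hdeh : aeval ![X 0, X 1, 1] FCh = FC q t k δ c Cc l)
    (ξ : AlgebraicClosure F0) (hξ : ξ ^ q ^ (k - 2 * t) = ξ) :
    (multAt (fxi FCh ξ) = q ^ (2 * t) - q ^ t ∨ multAt (fxi FCh ξ) = q ^ (2 * t)) ∧
      (multAt (fxi FCh ξ) = q ^ (2 * t) ↔ ξ ^ q ^ Nat.gcd k t = ξ) :=
  stmt_3_general q t k hq2 F0 hF0 ht h2tk δ l Cc c hCc hlq hFl FCh hhom hdeh ξ hξ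
end
end

section
/- Assume the setting below (case mindeg_q(G)=2t). Then the polynomial identity X^{q^t} G(λ) − λ^{q^t} G(X) = g(X)^{q^t} holds in F_{q^n}[X], where g(X) := G(λ)^{q^{n−t}} X − λ·( X^{q^t} + ∑_{i=2t+1}^{k−1} c_i^{q^{n−t}} X^{q^{i−t}} + C^{q^{n−t}} X^{q^{k−t}} ) is a separable polynomial of degree q^{k−t} (its coefficient of X is G(λ)^{q^{n−t}} ≠ 0). Consequently, the set of pairs (x̄, ȳ) in the algebraic closure of F_q satisfying x̄^{q^t} G(λ) − λ^{q^t} G(x̄) = 0 and ȳ^{q^t} G(λ) − λ^{q^t} G(ȳ) = 0 (i.e. the affine singular points of the curve C) has cardinality at most q^{2(k−t)}. -/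
open Polynomial

noncomputable section

/-- `G` as a univariate polynomial. -/
def Gpoly (q t k : ℕ) {Ω : Type*} [Field Ω] (c : ℕ → Ω) (Cc : Ω) : Polynomial Ω :=
  X ^ q ^ (2 * t) + (∑ i ∈ Finset.Ico (2 * t + 1) k, C (c i) * X ^ q ^ i) + C Cc * X ^ q ^ k

/-- `g(X) := G(λ)^(q^(n−t)) X − λ(X^(q^t) + ∑ c_i^(q^(n−t)) X^(q^(i−t)) + C^(q^(n−t)) X^(q^(k−t)))`. -/
def gsep (q n t k : ℕ) {Ω : Type*} [Field Ω] (c : ℕ → Ω) (Cc l : Ω) : Polynomial Ω :=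
  C (Gval q t k c Cc l ^ q ^ (n - t)) * X
    - C l * (X ^ q ^ t
        + (∑ i ∈ Finset.Ico (2 * t + 1) k, C (c i ^ q ^ (n - t)) * X ^ q ^ (i - t))
        + C (Cc ^ q ^ (n - t)) * X ^ q ^ (k - t))

/-- In the setting (case `mindeg_q G = 2t`):
`X^(q^t) G(λ) − λ^(q^t) G(X) = g(X)^(q^t)`, `g` is separable of degree `q^(k−t)` with
coefficient of `X` equal to `G(λ)^(q^(n−t)) ≠ 0`; consequently the set of affine singular
points of the curve `C` has cardinality at most `q^(2(k−t))`. -/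
theorem stmt_6 (q n t k : ℕ)
    (F0 : Type) [Field F0] [Fintype F0] (hF0 : Fintype.card F0 = q)
    (ht : 0 < t) (h2tk : 2 * t < k) (hkn : k < n)
    (δ l Cc : AlgebraicClosure F0) (c : ℕ → AlgebraicClosure F0)
    (hδK : δ ^ q ^ n = δ) (hlK : l ^ q ^ n = l) (hCcK : Cc ^ q ^ n = Cc)
    (hcK : ∀ i, c i ^ q ^ n = c i)
    (hnorm : δ ^ ((q ^ n - 1) / (q - 1)) ≠ 1) (hCc : Cc ≠ 0)
    (hlq : l ^ q ≠ l)
    (hFl : l + δ * l ^ q ^ (2 * t) ≠ 0) (hGl : Gval q t k c Cc l ≠ 0) :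
    X ^ q ^ t * C (Gval q t k c Cc l) - C (l ^ q ^ t) * Gpoly q t k c Cc
        = gsep q n t k c Cc l ^ q ^ t ∧
    (gsep q n t k c Cc l).natDegree = q ^ (k - t) ∧
    (gsep q n t k c Cc l).Separable ∧
    (gsep q n t k c Cc l).coeff 1 = Gval q t k c Cc l ^ q ^ (n - t) ∧
    Gval q t k c Cc l ^ q ^ (n - t) ≠ 0 ∧
    Set.ncard {p : AlgebraicClosure F0 × AlgebraicClosure F0 |
        p.1 ^ q ^ t * Gval q t k c Cc l - l ^ q ^ t * Gval q t k c Cc p.1 = 0 ∧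
        p.2 ^ q ^ t * Gval q t k c Cc l - l ^ q ^ t * Gval q t k c Cc p.2 = 0}
      ≤ q ^ (2 * (k - t)) := by
  classical
  set p : ℕ := ringChar F0 with hpdef
  have hp : p.Prime := CharP.char_is_prime F0 p
  haveI : Fact p.Prime := ⟨hp⟩
  obtain ⟨d, -, hqcard⟩ := FiniteField.card F0 p
  have hqpd : q = p ^ (d : ℕ) := hF0 ▸ hqcard
  haveI hchar : CharP (AlgebraicClosure F0) p :=
    charP_of_injective_algebraMap (algebraMap F0 (AlgebraicClosure F0)).injective _
  haveI : CharP (Polynomial (AlgebraicClosure F0)) p := inferInstance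
  haveI : ExpChar (AlgebraicClosure F0) p := .prime hp
  haveI : ExpChar (Polynomial (AlgebraicClosure F0)) p := .prime hp
  have hq2 : 2 ≤ q := hF0 ▸ Fintype.one_lt_card
  have hqs : ∀ s : ℕ, q ^ s = p ^ ((d : ℕ) * s) := fun s => by rw [hqpd, ← pow_mul]
  have htn : t ≤ n := by omega
  have hsubP : ∀ (u v : Polynomial (AlgebraicClosure F0)) (s : ℕ),
      (u - v) ^ q ^ s = u ^ q ^ s - v ^ q ^ s := by
    intro u v s; rw [hqs s]; exact sub_pow_char_pow u v _
  have haddP : ∀ (u v : Polynomial (AlgebraicClosure F0)) (s : ℕ),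
      (u + v) ^ q ^ s = u ^ q ^ s + v ^ q ^ s := by
    intro u v s; rw [hqs s]; exact add_pow_char_pow u v p _
  have hsumP : ∀ (S : Finset ℕ) (f : ℕ → Polynomial (AlgebraicClosure F0)) (s : ℕ),
      (∑ i ∈ S, f i) ^ q ^ s = ∑ i ∈ S, f i ^ q ^ s := by
    intro S f s; rw [hqs s]; exact sum_pow_char_pow (p := p) (n := (d : ℕ) * s) S f
  have haddE : ∀ (u v : AlgebraicClosure F0) (s : ℕ),
      (u + v) ^ q ^ s = u ^ q ^ s + v ^ q ^ s := by
    intro u v s; rw [hqs s]; exact add_pow_char_pow u v p _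
  have hsumE : ∀ (S : Finset ℕ) (f : ℕ → AlgebraicClosure F0) (s : ℕ),
      (∑ i ∈ S, f i) ^ q ^ s = ∑ i ∈ S, f i ^ q ^ s := by
    intro S f s; rw [hqs s]; exact sum_pow_char_pow (p := p) (n := (d : ℕ) * s) S f
  have hfix : ∀ a : AlgebraicClosure F0, a ^ q ^ n = a → ∀ s, (a ^ q ^ s) ^ q ^ n = a ^ q ^ s := by
    intro a ha s; rw [← pow_mul, mul_comm, pow_mul, ha]
  have hGlK : Gval q t k c Cc l ^ q ^ n = Gval q t k c Cc l := by
    simp only [Gval]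
    rw [haddE, haddE, hsumE]
    rw [hfix l hlK, mul_pow, hfix l hlK, hCcK]
    congr 2
    exact Finset.sum_congr rfl fun i _ => by rw [mul_pow, hcK i, hfix l hlK]
  have hback : ∀ a : AlgebraicClosure F0, a ^ q ^ n = a → (a ^ q ^ (n - t)) ^ q ^ t = a := by
    intro a ha; rw [← pow_mul, ← pow_add, Nat.sub_add_cancel htn]; exact ha
  have hXp : ∀ j : ℕ, t ≤ j →
      ((X : Polynomial (AlgebraicClosure F0)) ^ q ^ (j - t)) ^ q ^ t = X ^ q ^ j := by
    intro j hj; rw [← pow_mul, ← pow_add, Nat.sub_add_cancel hj]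
  have hCp : ∀ a : AlgebraicClosure F0, a ^ q ^ n = a →
      (C (a ^ q ^ (n - t)) : Polynomial (AlgebraicClosure F0)) ^ q ^ t = C a := by
    intro a ha; rw [← C_pow, hback a ha]
  -- PART 1
  have key : gsep q n t k c Cc l ^ q ^ t
      = X ^ q ^ t * C (Gval q t k c Cc l) - C (l ^ q ^ t) * Gpoly q t k c Cc := by
    simp only [gsep]
    rw [hsubP, mul_pow, mul_pow, haddP, haddP, hsumP, mul_pow]
    rw [hCp _ hGlK, hCp _ hCcK, hXp k (by omega)]
    have hXt : ((X : Polynomial (AlgebraicClosure F0)) ^ q ^ t) ^ q ^ t = X ^ q ^ (2 * t) := by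
      rw [← pow_mul, ← pow_add, two_mul]
    rw [hXt, ← C_pow]
    have hsum : (∑ i ∈ Finset.Ico (2 * t + 1) k,
        ((C (c i ^ q ^ (n - t)) : Polynomial (AlgebraicClosure F0)) * X ^ q ^ (i - t)) ^ q ^ t)
        = ∑ i ∈ Finset.Ico (2 * t + 1) k, C (c i) * X ^ q ^ i := by
      refine Finset.sum_congr rfl fun i hi => ?_
      have hit : t ≤ i := by have := (Finset.mem_Ico.mp hi).1; omega
      rw [mul_pow, hCp _ (hcK i), hXp i hit]
    rw [hsum]
    simp only [Gpoly]
    ring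
  refine ⟨key.symm, ?_⟩
  have hl0 : l ≠ 0 := by rintro rfl; exact hlq (by rw [zero_pow (by omega : q ≠ 0)])
  have ha : Gval q t k c Cc l ^ q ^ (n - t) ≠ 0 := pow_ne_zero _ hGl
  have hb : Cc ^ q ^ (n - t) ≠ 0 := pow_ne_zero _ hCc
  have hlt1 : ∀ {u v : ℕ}, u < v → q ^ u < q ^ v := fun h => Nat.pow_lt_pow_right hq2 h
  have hne1 : ∀ j : ℕ, 0 < j → (1 : ℕ) ≠ q ^ j := by
    intro j hj
    have := hlt1 (show 0 < j from hj)
    rw [pow_zero] at this; omega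
  -- PART 2 : natDegree
  have hdeg : (gsep q n t k c Cc l).natDegree = q ^ (k - t) := by
    have hTdeg : (∑ i ∈ Finset.Ico (2 * t + 1) k,
        (C (c i ^ q ^ (n - t)) : Polynomial (AlgebraicClosure F0)) * X ^ q ^ (i - t)).natDegree
        ≤ q ^ (k - t - 1) := by
      refine natDegree_sum_le_of_forall_le _ _ fun i hi => ?_
      refine le_trans (natDegree_C_mul_X_pow_le _ _) ?_
      exact Nat.pow_le_pow_right (by omega) (by have := (Finset.mem_Ico.mp hi).2; omega)
    have hS2 : ((X : Polynomial (AlgebraicClosure F0)) ^ q ^ t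
        + ∑ i ∈ Finset.Ico (2 * t + 1) k,
            C (c i ^ q ^ (n - t)) * X ^ q ^ (i - t)).natDegree < q ^ (k - t) := by
      refine lt_of_le_of_lt (natDegree_add_le _ _) ?_
      rw [natDegree_X_pow]
      exact max_lt (hlt1 (by omega)) (lt_of_le_of_lt hTdeg (hlt1 (by omega)))
    have hS : ((X : Polynomial (AlgebraicClosure F0)) ^ q ^ t
        + (∑ i ∈ Finset.Ico (2 * t + 1) k, C (c i ^ q ^ (n - t)) * X ^ q ^ (i - t))
        + C (Cc ^ q ^ (n - t)) * X ^ q ^ (k - t)).natDegree = q ^ (k - t) := by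
      rw [natDegree_add_eq_right_of_natDegree_lt, natDegree_C_mul_X_pow _ _ hb]
      rw [natDegree_C_mul_X_pow _ _ hb]; exact hS2
    simp only [gsep]
    rw [natDegree_sub_eq_right_of_natDegree_lt, natDegree_C_mul hl0, hS]
    rw [natDegree_C_mul hl0, hS]
    calc (C (Gval q t k c Cc l ^ q ^ (n - t)) * X).natDegree = 1 :=
          natDegree_C_mul_X _ ha
      _ < q ^ (k - t) := by
          calc 1 < q := hq2
            _ = q ^ 1 := (pow_one q).symm
            _ ≤ q ^ (k - t) := Nat.pow_le_pow_right (by omega) (by omega)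
  refine ⟨hdeg, ?_⟩
  -- PART 3 : separable
  have hqΩ : ((q : ℕ) : AlgebraicClosure F0) = 0 := by
    rw [hqpd, Nat.cast_pow, CharP.cast_eq_zero (AlgebraicClosure F0) p]
    exact zero_pow (by exact_mod_cast d.pos.ne')
  have h0 : ∀ j : ℕ, 0 < j → ((q ^ j : ℕ) : AlgebraicClosure F0) = 0 := fun j hj => by
    rw [Nat.cast_pow, hqΩ, zero_pow hj.ne']
  have hder : derivative (gsep q n t k c Cc l) = C (Gval q t k c Cc l ^ q ^ (n - t)) := by
    simp only [gsep, derivative_sub, derivative_add, derivative_sum, derivative_C_mul,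
      derivative_X, derivative_X_pow]
    rw [h0 t ht, h0 (k - t) (by omega)]
    rw [Finset.sum_eq_zero fun i hi => by
      rw [h0 (i - t) (by have := (Finset.mem_Ico.mp hi).1; omega)]
      simp]
    simp
  have hsep : (gsep q n t k c Cc l).Separable := by
    refine ⟨0, C (Gval q t k c Cc l ^ q ^ (n - t))⁻¹, ?_⟩
    rw [hder, zero_mul, zero_add, ← C_mul, inv_mul_cancel₀ ha, C_1]
  refine ⟨hsep, ?_, ha, ?_⟩
  -- PART 4 : coeff 1
  · simp only [gsep, coeff_sub, coeff_C_mul, coeff_add, coeff_X_pow, coeff_X_one,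
      finset_sum_coeff, mul_one]
    rw [if_neg (hne1 t ht), if_neg (hne1 (k - t) (by omega))]
    rw [Finset.sum_eq_zero fun i hi => by
      simp only [if_neg (hne1 (i - t) (by have := (Finset.mem_Ico.mp hi).1; omega)), mul_zero]]
    ring
  -- PART 6 : cardinality
  · have hgs0 : gsep q n t k c Cc l ≠ 0 := by
      intro h
      rw [h, natDegree_zero] at hdeg
      have h1 : (1 : ℕ) ≠ q ^ (k - t) := hne1 (k - t) (by omega)
      have h2 : 0 < q ^ (k - t) := by positivity
      omega
    have hevalG : ∀ x : AlgebraicClosure F0,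
        eval x (Gpoly q t k c Cc) = Gval q t k c Cc x := fun x => by
      simp [Gpoly, Gval, eval_finset_sum]
    have hqt0 : q ^ t ≠ 0 := by positivity
    have hmem : ∀ x : AlgebraicClosure F0,
        (x ^ q ^ t * Gval q t k c Cc l - l ^ q ^ t * Gval q t k c Cc x = 0)
        ↔ eval x (gsep q n t k c Cc l) = 0 := by
      intro x
      have he : (eval x (gsep q n t k c Cc l)) ^ q ^ t
          = x ^ q ^ t * Gval q t k c Cc l - l ^ q ^ t * Gval q t k c Cc x := by
        rw [← eval_pow, key]
        simp only [eval_sub, eval_mul, eval_pow, eval_X, eval_C, hevalG x]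
      rw [← he, pow_eq_zero_iff hqt0]
    set Fs : Finset (AlgebraicClosure F0) := (gsep q n t k c Cc l).roots.toFinset with hFs
    have hset : {pp : AlgebraicClosure F0 × AlgebraicClosure F0 |
        pp.1 ^ q ^ t * Gval q t k c Cc l - l ^ q ^ t * Gval q t k c Cc pp.1 = 0 ∧
        pp.2 ^ q ^ t * Gval q t k c Cc l - l ^ q ^ t * Gval q t k c Cc pp.2 = 0}
        = ↑(Fs ×ˢ Fs) := by
      ext ⟨x, y⟩
      simp only [Set.mem_setOf_eq, Finset.coe_product, Set.mem_prod, hFs,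
        Finset.mem_coe, Multiset.mem_toFinset, mem_roots', IsRoot.def]
      rw [hmem x, hmem y]
      tauto
    rw [hset, Set.ncard_coe_finset, Finset.card_product]
    have hcard : Fs.card ≤ q ^ (k - t) := by
      calc Fs.card ≤ Multiset.card (gsep q n t k c Cc l).roots :=
            (gsep q n t k c Cc l).roots.toFinset_card_le
        _ ≤ (gsep q n t k c Cc l).natDegree := (gsep q n t k c Cc l).card_roots'
        _ = q ^ (k - t) := hdeg
    calc Fs.card * Fs.card ≤ q ^ (k - t) * q ^ (k - t) := Nat.mul_le_mul hcard hcard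
      _ = q ^ (2 * (k - t)) := by rw [← pow_add, two_mul]

end
end

section
/- Let q be a prime power, r and n positive integers with r ≤ n+1, 0 ≤ t < n, and let f_1(x) = x^{q^t}, f_2(x), …, f_r(x) be q-polynomials over F_{q^n} of q-degree smaller than n that are F_{q^n}-linearly independent as maps on F_{q^n}. Then the following are equivalent: (i) the F_{q^n}-linear rank-metric code C = ⟨f_1, …, f_r⟩_{F_{q^n}} is MRD, i.e. every nonzero F_{q^n}-linear combination of f_1, …, f_r, viewed as an F_q-linear endomorphism of F_{q^n}, has kernel of F_q-dimension at most r−1; (ii) (f_1, …, f_r) is a Moore polynomial set for q and n, i.e. for all α_1, …, α_r ∈ F_{q^n}, if det( f_j(α_i) )_{1≤i,j≤r} = 0 then α_1, …, α_r are F_q-linearly dependent. -/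
set_option maxHeartbeats 1000000

open Polynomial

private lemma pow_pow_fixed {K : Type*} [CommMonoid K] {q : ℕ} {c : K} (hc : c ^ q = c) :
    ∀ i : ℕ, c ^ q ^ i = c
  | 0 => pow_one c
  | i + 1 => by rw [pow_succ, pow_mul, pow_pow_fixed hc i, hc]

/-- Let `r ≤ n+1`, `0 ≤ t < n`, and let `f_1(x) = x^(q^t), f_2, …, f_r`
be `q`-polynomials over `F_(q^n)` of `q`-degree smaller than `n` (given via coefficient
functions `a j`) which are `F_(q^n)`-linearly independent as maps on `F_(q^n)`. Then the
code `C = ⟨f_1, …, f_r⟩` is MRD (every nonzero `F_(q^n)`-linear combination has kernel of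
`F_q`-dimension at most `r−1`, i.e. of cardinality at most `q^(r−1)`) if and only if
`(f_1, …, f_r)` is a Moore polynomial set for `q` and `n` (whenever `det(f_j(α_i)) = 0`,
the `α_i` are `F_q`-linearly dependent). -/
theorem stmt_12 (q n r t : ℕ) (hq : ∃ p e : ℕ, p.Prime ∧ 0 < e ∧ q = p ^ e)
    (hr : 1 ≤ r) (hrn : r ≤ n + 1) (htn : t < n)
    (K : Type) [Field K] [Fintype K] (hK : Fintype.card K = q ^ n)
    (a : Fin r → ℕ → K)
    (ha0 : ∀ i, a ⟨0, hr⟩ i = if i = t then 1 else 0)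
    (hadeg : ∀ j i, n ≤ i → a j i = 0)
    (hind : ∀ d : Fin r → K,
      (∀ x : K, ∑ j : Fin r, d j * (∑ i ∈ Finset.range n, a j i * x ^ q ^ i) = 0) →
      d = 0) :
    (∀ d : Fin r → K, d ≠ 0 →
        Set.ncard {x : K |
            ∑ j : Fin r, d j * (∑ i ∈ Finset.range n, a j i * x ^ q ^ i) = 0}
          ≤ q ^ (r - 1)) ↔
    (∀ α : Fin r → K,
        Matrix.det
            (Matrix.of fun i j : Fin r => ∑ s ∈ Finset.range n, a j s * (α i) ^ q ^ s)
          = 0 →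
        ∃ d : Fin r → K, (∀ j, d j ^ q = d j) ∧ d ≠ 0 ∧ ∑ j : Fin r, d j * α j = 0) := by
  classical
  obtain ⟨p, e, hp, he, hqe⟩ := hq
  haveI : Fact p.Prime := ⟨hp⟩
  have hq1 : 1 < q := by rw [hqe]; exact Nat.one_lt_pow he.ne' hp.one_lt
  have hq0 : q ≠ 0 := by omega
  have hn : 0 < n := by omega
  -- characteristic
  haveI hCh : CharP K p := by
    obtain ⟨m, hcp, hcard⟩ := FiniteField.card K (ringChar K)
    have h1 : p ^ (e * n) = ringChar K ^ (m : ℕ) := by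
      rw [← hcard, hK, hqe, ← pow_mul]
    have hpd : p ∣ ringChar K ^ (m : ℕ) := by
      rw [← h1]
      exact dvd_pow_self p (by positivity)
    have : p = ringChar K := by
      have h2 := hp.dvd_of_dvd_pow hpd
      exact ((Nat.prime_dvd_prime_iff_eq hp hcp).1 h2)
    rw [this]; exact ringChar.charP K
  -- Frobenius additivity
  have hadd : ∀ (i : ℕ) (x y : K), (x + y) ^ q ^ i = x ^ q ^ i + y ^ q ^ i := by
    intro i x y
    have h := map_add (iterateFrobenius K p (e * i)) x y
    simpa [iterateFrobenius_def, hqe, ← pow_mul] using h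
  -- the subfield F_q
  set F : Subfield K := RingHom.eqLocusField (iterateFrobenius K p e) (RingHom.id K) with hF
  have hFmem : ∀ x : K, x ∈ F ↔ x ^ q = x := by
    intro x
    have : x ∈ F ↔ iterateFrobenius K p e x = x := Iff.rfl
    rw [this, iterateFrobenius_def, hqe]
  -- cardinality of F
  have hFcard : Nat.card F = q := by
    have hub : Nat.card F ≤ q := by
      have hne : (X ^ q - X : K[X]) ≠ 0 := FiniteField.X_pow_card_sub_X_ne_zero K hq1
      have hsub : (F : Set K).toFinset ⊆ (X ^ q - X : K[X]).roots.toFinset := by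
        intro x hx
        rw [Set.mem_toFinset, SetLike.mem_coe, hFmem] at hx
        rw [Multiset.mem_toFinset, mem_roots hne]
        simp [IsRoot.def, sub_eq_zero, hx]
      calc Nat.card F = (F : Set K).toFinset.card := by
            rw [show Nat.card F = Nat.card (F : Set K) from rfl,
              Nat.card_coe_set_eq, Set.ncard_eq_toFinset_card']
        _ ≤ (X ^ q - X : K[X]).roots.toFinset.card := Finset.card_le_card hsub
        _ ≤ Multiset.card (X ^ q - X : K[X]).roots := Multiset.toFinset_card_le _
        _ ≤ (X ^ q - X : K[X]).natDegree := Polynomial.card_roots' _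
        _ = q := FiniteField.X_pow_card_sub_X_natDegree_eq K hq1
    have hlb : q ≤ Nat.card F := by
      obtain ⟨ζ, hζ⟩ := IsCyclic.exists_ofOrder_eq_natCard (α := Kˣ)
      have hNcard : Nat.card Kˣ = q ^ n - 1 := by
        rw [Nat.card_eq_fintype_card, Fintype.card_units, hK]
      have hN0 : q ^ n - 1 ≠ 0 := by
        have : q ≤ q ^ n := Nat.le_self_pow hn.ne' q
        omega
      have hdvd : (q - 1) ∣ (q ^ n - 1) := by
        simpa using Nat.sub_dvd_pow_sub_pow q 1 n
      set m := (q ^ n - 1) / (q - 1) with hm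
      have hmd : m ∣ q ^ n - 1 := Nat.div_dvd_of_dvd hdvd
      set gU : Kˣ := ζ ^ m with hgU
      have hord : orderOf gU = q - 1 := by
        rw [hgU, orderOf_pow, hζ, hNcard, Nat.gcd_eq_right hmd, hm,
          Nat.div_div_self hdvd hN0]
      have hg1 : gU ^ (q - 1) = 1 := by rw [← hord]; exact pow_orderOf_eq_one gU
      set T : Finset K :=
        (Finset.image (fun i : Fin (q - 1) => ((gU ^ (i : ℕ) : Kˣ) : K)) Finset.univ)
          ∪ {0} with hT
      have hTsub : T ⊆ (F : Set K).toFinset := by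
        intro x hx
        rw [Set.mem_toFinset, SetLike.mem_coe, hFmem]
        rw [hT, Finset.mem_union, Finset.mem_image] at hx
        rcases hx with ⟨i, _, rfl⟩ | hx
        · have hpow : ((gU ^ (i : ℕ) : Kˣ) : K) ^ (q - 1) = 1 := by
            have : (gU ^ (i : ℕ)) ^ (q - 1) = 1 := by
              rw [← pow_mul, mul_comm, pow_mul, hg1, one_pow]
            simpa using congrArg (Units.val) this
          calc ((gU ^ (i : ℕ) : Kˣ) : K) ^ q
              = ((gU ^ (i : ℕ) : Kˣ) : K) ^ (q - 1) * ((gU ^ (i : ℕ) : Kˣ) : K) := by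
                rw [← pow_succ]; congr 1; omega
            _ = ((gU ^ (i : ℕ) : Kˣ) : K) := by rw [hpow, one_mul]
        · simp only [Finset.mem_singleton] at hx
          rw [hx]
          exact zero_pow hq0
      have hTcard : T.card = q := by
        have hinj : Function.Injective (fun i : Fin (q - 1) => ((gU ^ (i : ℕ) : Kˣ) : K)) := by
          intro i j hij
          have h1 : gU ^ (i : ℕ) = gU ^ (j : ℕ) := Units.ext hij
          have h2 := pow_injOn_Iio_orderOf (x := gU)
            (by rw [Set.mem_Iio, hord]; exact i.2) (by rw [Set.mem_Iio, hord]; exact j.2) h1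
          exact Fin.ext h2
        have h0 : (0 : K) ∉ Finset.image
            (fun i : Fin (q - 1) => ((gU ^ (i : ℕ) : Kˣ) : K)) Finset.univ := by
          simp only [Finset.mem_image]
          rintro ⟨i, -, hi⟩
          exact Units.ne_zero _ hi
        rw [hT, Finset.card_union_of_disjoint (by simpa using h0),
          Finset.card_image_of_injective _ hinj]
        simp
        omega
      calc q = T.card := hTcard.symm
        _ ≤ (F : Set K).toFinset.card := Finset.card_le_card hTsub
        _ = Nat.card F := by
            rw [show Nat.card F = Nat.card (F : Set K) from rfl,
              Nat.card_coe_set_eq, Set.ncard_eq_toFinset_card']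
    omega
  -- the linearized polynomial map
  set g : (Fin r → K) → K → K :=
    fun d x => ∑ j : Fin r, d j * (∑ i ∈ Finset.range n, a j i * x ^ q ^ i) with hg
  have gadd : ∀ d (x y : K), g d (x + y) = g d x + g d y := by
    intro d x y
    simp only [hg]
    rw [← Finset.sum_add_distrib]
    refine Finset.sum_congr rfl fun j _ => ?_
    rw [← mul_add, ← Finset.sum_add_distrib]
    congr 1
    refine Finset.sum_congr rfl fun i _ => ?_
    rw [hadd, mul_add]
  have gsmul : ∀ d (c : K), c ^ q = c → ∀ x : K, g d (c * x) = c * g d x := by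
    intro d c hc x
    simp only [hg, Finset.mul_sum]
    refine Finset.sum_congr rfl fun j _ => ?_
    refine Finset.sum_congr rfl fun i _ => ?_
    rw [mul_pow, pow_pow_fixed hc]
    ring
  have gzero : ∀ d, g d 0 = 0 := by
    intro d
    simp only [hg]
    simp [zero_pow (pow_ne_zero _ hq0)]
  -- zero sets as F-submodules
  set Z : (Fin r → K) → Submodule F K := fun d =>
    { carrier := {x : K | g d x = 0}
      add_mem' := fun {x y} hx hy => by
        simp only [Set.mem_setOf_eq] at *
        rw [gadd, hx, hy, add_zero]
      zero_mem' := gzero d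
      smul_mem' := fun c x hx => by
        simp only [Set.mem_setOf_eq] at *
        have hc : (c : K) ^ q = (c : K) := (hFmem _).1 c.2
        show g d ((c : K) * x) = 0
        rw [gsmul d _ hc, hx, mul_zero] } with hZ
  haveI : Fintype F := Fintype.ofFinite F
  have hFq : Fintype.card F = q := by rw [← Nat.card_eq_fintype_card, hFcard]
  haveI : Module.Finite F K := Module.Finite.of_finite (R := F)
  have hZcard : ∀ d, Set.ncard {x : K | g d x = 0} = q ^ Module.finrank F (Z d) := by
    intro d
    haveI : Fintype (Z d) := Fintype.ofFinite _
    have h1 : Set.ncard {x : K | g d x = 0} = Nat.card (Z d) := by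
      rw [← Nat.card_coe_set_eq]
      rfl
    rw [h1, Nat.card_eq_fintype_card, Module.card_eq_pow_finrank (K := F) (V := Z d), hFq]
  -- independence bridge
  have hsmul : ∀ (c : F) (x : K), c • x = (c : K) * x := fun _ _ => rfl
  have hbridge : ∀ α : Fin r → K,
      (¬ ∃ d : Fin r → K, (∀ j, d j ^ q = d j) ∧ d ≠ 0 ∧ ∑ j : Fin r, d j * α j = 0) ↔
        LinearIndependent F α := by
    intro α
    constructor
    · intro h
      rw [Fintype.linearIndependent_iff]
      intro c hc
      by_contra hcon
      push_neg at hcon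
      obtain ⟨i, hi⟩ := hcon
      refine h ⟨fun j => (c j : K), fun j => (hFmem _).1 (c j).2, ?_, ?_⟩
      · intro h0
        exact hi (Subtype.ext (congrFun h0 i))
      · simpa [hsmul] using hc
    · rintro hli ⟨d, hdF, hdne, hdsum⟩
      have hc := Fintype.linearIndependent_iff.1 hli
        (fun j => (⟨d j, (hFmem _).2 (hdF j)⟩ : F)) (by simpa [hsmul] using hdsum)
      apply hdne
      funext j
      exact congrArg Subtype.val (hc j)
  -- rank bounds
  have hrank : ∀ (W : Submodule F K) (α : Fin r → K), (∀ i, α i ∈ W) →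
      LinearIndependent F α → r ≤ Module.finrank F W := by
    intro W α hmem hli
    have hli' : LinearIndependent F (fun i => (⟨α i, hmem i⟩ : W)) := by
      apply LinearIndependent.of_comp W.subtype
      exact hli
    simpa using hli'.fintype_card_le_finrank
  have hpick : ∀ (W : Submodule F K), r ≤ Module.finrank F W →
      ∃ α : Fin r → K, (∀ i, α i ∈ W) ∧ LinearIndependent F α := by
    intro W hW
    let b := Module.finBasis F W
    refine ⟨fun i => (b (Fin.castLE hW i) : K), fun i => (b (Fin.castLE hW i)).2, ?_⟩
    have h1 : LinearIndependent F (fun i : Fin r => b (Fin.castLE hW i)) :=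
      b.linearIndependent.comp _ (Fin.castLE_injective hW)
    exact h1.map' W.subtype (Submodule.ker_subtype W)
  -- main equivalence
  constructor
  · intro hMRD α hdet
    by_contra hno
    have hli : LinearIndependent F α := (hbridge α).1 hno
    obtain ⟨v, hv0, hv⟩ := Matrix.exists_mulVec_eq_zero_iff.2 hdet
    have hmem : ∀ i, α i ∈ Z v := by
      intro i
      have h1 := congrFun hv i
      simp only [Matrix.mulVec, dotProduct, Matrix.of_apply, Pi.zero_apply] at h1
      show g v (α i) = 0
      rw [hg]
      simpa [mul_comm] using h1
    have h1 : r ≤ Module.finrank F (Z v) := hrank _ α hmem hli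
    have h2 := hMRD v hv0
    rw [show {x : K | ∑ j : Fin r, v j * (∑ i ∈ Finset.range n, a j i * x ^ q ^ i) = 0}
        = {x : K | g v x = 0} from rfl, hZcard v] at h2
    have h3 : q ^ r ≤ q ^ Module.finrank F (Z v) :=
      Nat.pow_le_pow_right (by omega) h1
    have h4 : q ^ (r - 1) < q ^ r := Nat.pow_lt_pow_right hq1 (by omega)
    omega
  · intro hMoore d hd0
    rw [show {x : K | ∑ j : Fin r, d j * (∑ i ∈ Finset.range n, a j i * x ^ q ^ i) = 0}
        = {x : K | g d x = 0} from rfl, hZcard d]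
    by_contra hgt
    push_neg at hgt
    have hge : r ≤ Module.finrank F (Z d) := by
      by_contra hlt
      push_neg at hlt
      have : q ^ Module.finrank F (Z d) ≤ q ^ (r - 1) :=
        Nat.pow_le_pow_right (by omega) (by omega)
      omega
    obtain ⟨α, hmem, hli⟩ := hpick (Z d) hge
    have hdet : (Matrix.of fun i j : Fin r =>
        ∑ s ∈ Finset.range n, a j s * (α i) ^ q ^ s).det = 0 := by
      rw [← Matrix.exists_mulVec_eq_zero_iff]
      refine ⟨d, hd0, ?_⟩
      funext i
      have h1 : g d (α i) = 0 := hmem i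
      rw [hg] at h1
      simp only [Matrix.mulVec, dotProduct, Matrix.of_apply, Pi.zero_apply]
      simpa [mul_comm] using h1
    obtain ⟨c, hcF, hc0, hcsum⟩ := hMoore α hdet
    exact (hbridge α).2 hli ⟨c, hcF, hc0, hcsum⟩
end

section
/- Assume the setting below (case mindeg_q(G)=t/2, t even). Then the polynomial identity X^{q^t} G(λ) − λ^{q^t} G(X) = g(X)^{q^{t/2}} holds in F_{q^n}[X], where g(X) := G(λ)^{q^{n−t/2}} X^{q^{t/2}} − λ^{q^{t/2}}·( X + ∑ c_i^{q^{n−t/2}} X^{q^{i−t/2}} + C^{q^{n−t/2}} X^{q^{k−t/2}} ) is a separable polynomial of degree q^{k−t/2} (its coefficient of X is −λ^{q^{t/2}} ≠ 0). Consequently, the set of pairs (x̄, ȳ) in the algebraic closure of F_q with x̄^{q^t} G(λ) − λ^{q^t} G(x̄) = 0 and ȳ^{q^t} G(λ) − λ^{q^t} G(ȳ) = 0 (the affine singular points of the curve C) has cardinality at most q^{2k−t}. -/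
open Polynomial

/-! Raising to the power `q^{t/2}` is additive on `F̄_q[X]` and, on the coefficients (which lie
in `F_{q^n}`), inverts raising to the power `q^{n-t/2}`; applied termwise to `g` it therefore
yields `X^{q^t} G(λ) - λ^{q^t} G(X)`. All exponents of `g` other than `1` are multiples of `q`,
so `g' = -λ^{q^{t/2}}` is a nonzero constant and `g` is separable. A singular point is a pair of
roots of `g^{q^{t/2}}`, hence of `g`, which leaves at most `(deg g)^2 = q^{2k-t}` of them. -/

noncomputable section

/-- `G(x) = x^(q^(t/2)) + ∑_{i=t/2+1}^{k-1} c_i x^(q^i) + C x^(q^k)` (value at `x`),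
case `mindeg_q G = t/2`. -/
def Gval2 (q t k : ℕ) {Ω : Type*} [Field Ω] (c : ℕ → Ω) (Cc x : Ω) : Ω :=
  x ^ q ^ (t / 2) + (∑ i ∈ Finset.Ico (t / 2 + 1) k, c i * x ^ q ^ i) + Cc * x ^ q ^ k

/-- `G` as a univariate polynomial. -/
def Gpoly2 (q t k : ℕ) {Ω : Type*} [Field Ω] (c : ℕ → Ω) (Cc : Ω) : Polynomial Ω :=
  X ^ q ^ (t / 2) + (∑ i ∈ Finset.Ico (t / 2 + 1) k, C (c i) * X ^ q ^ i) + C Cc * X ^ q ^ k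

/-- `g(X) := G(λ)^(q^(n−t/2)) X^(q^(t/2)) − λ^(q^(t/2)) (X + ∑ c_i^(q^(n−t/2)) X^(q^(i−t/2))
+ C^(q^(n−t/2)) X^(q^(k−t/2)))`. -/
def gsep2 (q n t k : ℕ) {Ω : Type*} [Field Ω] (c : ℕ → Ω) (Cc l : Ω) : Polynomial Ω :=
  C (Gval2 q t k c Cc l ^ q ^ (n - t / 2)) * X ^ q ^ (t / 2)
    - C (l ^ q ^ (t / 2)) * (X
        + (∑ i ∈ Finset.Ico (t / 2 + 1) k, C (c i ^ q ^ (n - t / 2)) * X ^ q ^ (i - t / 2))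
        + C (Cc ^ q ^ (n - t / 2)) * X ^ q ^ (k - t / 2))

namespace FiniteField

variable (K R : Type*) [Field K] [Fintype K] [CommRing R] [Algebra K R]

theorem frobeniusAlgHom_pow_apply (m : ℕ) (x : R) :
    (frobeniusAlgHom K R ^ m) x = x ^ Fintype.card K ^ m := by
  rw [AlgHom.coe_pow, coe_frobeniusAlgHom, pow_iterate]

theorem derivative_X_pow_card_pow {m : ℕ} (hm : m ≠ 0) :
    derivative (X ^ Fintype.card K ^ m : R[X]) = 0 := by
  have hq : (Fintype.card K : R) = 0 := by
    rw [← map_natCast (algebraMap K R), cast_card_eq_zero, map_zero]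
  rw [derivative_X_pow, Nat.cast_pow, hq, zero_pow hm, C_0, zero_mul]

end FiniteField

theorem pow_pow_sub_of_pow_eq_self {M : Type*} [Monoid M] {x : M} {q n s : ℕ}
    (hx : x ^ q ^ n = x) (hs : s ≤ n) : (x ^ q ^ (n - s)) ^ q ^ s = x := by
  rw [← pow_mul, ← pow_add, Nat.sub_add_cancel hs, hx]

theorem Polynomial.ncard_setOf_isRoot_prod_le {R : Type*} [CommRing R] [IsDomain R] {g : R[X]}
    (hg : g ≠ 0) : {p : R × R | g.IsRoot p.1 ∧ g.IsRoot p.2}.ncard ≤ g.natDegree ^ 2 := by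
  classical
  set T := g.roots.toFinset
  have hT : {p : R × R | g.IsRoot p.1 ∧ g.IsRoot p.2} = ↑(T ×ˢ T) := by
    ext p
    simp [T, mem_roots hg]
  have hcard : T.card ≤ g.natDegree := (Multiset.toFinset_card_le _).trans (card_roots' g)
  rw [hT, Set.ncard_coe_finset, Finset.card_product, sq]
  exact Nat.mul_le_mul hcard hcard

section

variable {L : Type*} [Field L] {q n t k : ℕ} (c : ℕ → L) (Cc l : L)

theorem natDegree_gsep2 (hq : 1 < q) (htk : t / 2 < k - t / 2) (hCc : Cc ≠ 0)
    (hl : l ≠ 0) : (gsep2 q n t k c Cc l).natDegree = q ^ (k - t / 2) := by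
  have hsplit : gsep2 q n t k c Cc l
      = C (-(l ^ q ^ (t / 2) * Cc ^ q ^ (n - t / 2))) * X ^ q ^ (k - t / 2)
        + (C (Gval2 q t k c Cc l ^ q ^ (n - t / 2)) * X ^ q ^ (t / 2)
          - C (l ^ q ^ (t / 2)) * X ^ q ^ 0
          - C (l ^ q ^ (t / 2)) * ∑ i ∈ Finset.Ico (t / 2 + 1) k,
              C (c i ^ q ^ (n - t / 2)) * X ^ q ^ (i - t / 2)) := by
    simp only [gsep2, C_neg, C_mul, pow_zero, pow_one]
    ring
  have hmono : ∀ (a : L) (m : ℕ), m < k - t / 2 →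
      (C a * X ^ q ^ m).degree < ((q ^ (k - t / 2) : ℕ) : WithBot ℕ) := fun a m hm ↦
    (degree_C_mul_X_pow_le _ _).trans_lt
      (WithBot.coe_lt_coe.mpr (Nat.pow_lt_pow_right hq hm))
  have hsum : (∑ i ∈ Finset.Ico (t / 2 + 1) k,
      C (c i ^ q ^ (n - t / 2)) * X ^ q ^ (i - t / 2)).degree
        < ((q ^ (k - t / 2) : ℕ) : WithBot ℕ) :=
    (degree_sum_le _ _).trans_lt
      ((Finset.sup_lt_iff (WithBot.bot_lt_coe _)).2 fun i hi ↦ hmono _ _ (by grind))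
  have hlead : -(l ^ q ^ (t / 2) * Cc ^ q ^ (n - t / 2)) ≠ 0 :=
    neg_ne_zero.mpr (mul_ne_zero (pow_ne_zero _ hl) (pow_ne_zero _ hCc))
  rw [hsplit, natDegree_add_eq_left_of_degree_lt, natDegree_C_mul_X_pow _ _ hlead]
  rw [degree_C_mul_X_pow _ hlead]
  refine (degree_sub_le _ _).trans_lt (max_lt ((degree_sub_le _ _).trans_lt
    (max_lt (hmono _ _ htk) (hmono _ _ (by omega)))) ?_)
  rwa [degree_C_mul (pow_ne_zero _ hl)]

open FiniteField

variable {K : Type*} [Field K] [Fintype K] [Algebra K L]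

theorem eval_Gpoly2 (x : L) : (Gpoly2 q t k c Cc).eval x = Gval2 q t k c Cc x := by
  simp [Gpoly2, Gval2, eval_finsetSum]

theorem Gval2_pow_card_pow (hq : Fintype.card K = q) (m : ℕ) (x : L) :
    Gval2 q t k c Cc x ^ q ^ m = Gval2 q t k (fun i ↦ c i ^ q ^ m) (Cc ^ q ^ m) (x ^ q ^ m) := by
  subst hq
  rw [← frobeniusAlgHom_pow_apply K L]
  simp only [Gval2, map_add, map_sum, map_mul, frobeniusAlgHom_pow_apply, pow_right_comm x]

theorem Gval2_pow_card_pow_eq_self (hq : Fintype.card K = q) (hc : ∀ i, c i ^ q ^ n = c i)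
    (hCc : Cc ^ q ^ n = Cc) (hl : l ^ q ^ n = l) :
    Gval2 q t k c Cc l ^ q ^ n = Gval2 q t k c Cc l := by
  rw [Gval2_pow_card_pow c Cc hq, hCc, hl]
  simp only [hc]

theorem gsep2_pow_card_pow (hq : Fintype.card K = q) (ht : t % 2 = 0) (htk : t / 2 ≤ k)
    (htn : t / 2 ≤ n) (hc : ∀ i, c i ^ q ^ n = c i) (hCc : Cc ^ q ^ n = Cc)
    (hl : l ^ q ^ n = l) :
    gsep2 q n t k c Cc l ^ q ^ (t / 2)
      = X ^ q ^ t * C (Gval2 q t k c Cc l) - C (l ^ q ^ t) * Gpoly2 q t k c Cc := by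
  have hG := Gval2_pow_card_pow_eq_self (t := t) (k := k) c Cc l hq hc hCc hl
  have hsum : ∀ i ∈ Finset.Ico (t / 2 + 1) k,
      C (c i ^ q ^ (n - t / 2)) ^ q ^ (t / 2) * (X ^ q ^ (i - t / 2)) ^ q ^ (t / 2)
        = (C (c i) * X ^ q ^ i : L[X]) := by
    intro i hi
    rw [← C_pow, pow_pow_sub_of_pow_eq_self (hc i) htn, ← pow_mul, ← pow_add,
      Nat.sub_add_cancel (by grind)]
  subst hq
  rw [← frobeniusAlgHom_pow_apply K L[X]]
  simp only [gsep2, map_sub, map_add, map_sum, map_mul, frobeniusAlgHom_pow_apply]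
  rw [Finset.sum_congr rfl hsum]
  simp only [← C_pow, pow_pow_sub_of_pow_eq_self hG htn, pow_pow_sub_of_pow_eq_self hCc htn,
    ← pow_mul, ← pow_add, Nat.sub_add_cancel htk, ← two_mul,
    Nat.mul_div_cancel' (Nat.dvd_of_mod_eq_zero ht), Gpoly2]
  ring

theorem derivative_gsep2 (hq : Fintype.card K = q) (ht : 0 < t / 2) (htk : t / 2 < k) :
    derivative (gsep2 q n t k c Cc l) = -C (l ^ q ^ (t / 2)) := by
  subst hq
  have hX : ∀ {m}, m ≠ 0 → derivative (X ^ Fintype.card K ^ m : L[X]) = 0 :=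
    derivative_X_pow_card_pow K L
  simp only [gsep2, derivative_sub, derivative_add, derivative_C_mul, derivative_sum,
    derivative_X, hX ht.ne', hX (Nat.sub_ne_zero_of_lt htk)]
  rw [Finset.sum_eq_zero fun i hi ↦ by rw [hX (by grind), mul_zero]]
  ring

theorem coeff_gsep2_one (hq : Fintype.card K = q) (ht : 0 < t / 2) (htk : t / 2 < k) :
    (gsep2 q n t k c Cc l).coeff 1 = -(l ^ q ^ (t / 2)) := by
  have h := coeff_derivative (gsep2 q n t k c Cc l) 0
  rw [derivative_gsep2 c Cc l hq ht htk, ← C_neg, coeff_C_zero] at h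
  simpa using h.symm

theorem separable_gsep2 (hq : Fintype.card K = q) (ht : 0 < t / 2) (htk : t / 2 < k)
    (hl : l ≠ 0) : (gsep2 q n t k c Cc l).Separable := by
  rw [separable_def, derivative_gsep2 c Cc l hq ht htk, ← C_neg]
  refine isCoprime_one_right.of_isCoprime_of_dvd_right (isUnit_iff_dvd_one.mp ?_)
  exact isUnit_C.mpr (neg_ne_zero.mpr (pow_ne_zero _ hl)).isUnit

end

theorem stmt_16_general (q n t k : ℕ)
    (F0 : Type) [Field F0] [Fintype F0] (hF0 : Fintype.card F0 = q)
    (ht : 0 < t) (hteven : t % 2 = 0) (h2tk : 2 * t < k) (hkn : k < n)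
    (l Cc : AlgebraicClosure F0) (c : ℕ → AlgebraicClosure F0)
    (hlK : l ^ q ^ n = l) (hCcK : Cc ^ q ^ n = Cc)
    (hcK : ∀ i, c i ^ q ^ n = c i)
    (hCc : Cc ≠ 0)
    (hlq : l ^ q ≠ l) :
    X ^ q ^ t * C (Gval2 q t k c Cc l) - C (l ^ q ^ t) * Gpoly2 q t k c Cc
        = gsep2 q n t k c Cc l ^ q ^ (t / 2) ∧
    (gsep2 q n t k c Cc l).natDegree = q ^ (k - t / 2) ∧
    (gsep2 q n t k c Cc l).Separable ∧
    (gsep2 q n t k c Cc l).coeff 1 = -(l ^ q ^ (t / 2)) ∧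
    -(l ^ q ^ (t / 2)) ≠ 0 ∧
    Set.ncard {p : AlgebraicClosure F0 × AlgebraicClosure F0 |
        p.1 ^ q ^ t * Gval2 q t k c Cc l - l ^ q ^ t * Gval2 q t k c Cc p.1 = 0 ∧
        p.2 ^ q ^ t * Gval2 q t k c Cc l - l ^ q ^ t * Gval2 q t k c Cc p.2 = 0}
      ≤ q ^ (2 * k - t) := by
  have hq : 1 < q := hF0 ▸ Fintype.one_lt_card
  have hl : l ≠ 0 := by rintro rfl; exact hlq (zero_pow (by positivity))
  have key := gsep2_pow_card_pow (t := t) (k := k) c Cc l hF0 hteven (by omega) (by omega) hcK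
    hCcK hlK
  have hsep := separable_gsep2 (n := n) c Cc l hF0 (by omega) (by omega : t / 2 < k) hl
  have hdeg := natDegree_gsep2 (n := n) (t := t) (k := k) c Cc l hq (by omega) hCc hl
  have hroot : ∀ x, x ^ q ^ t * Gval2 q t k c Cc l - l ^ q ^ t * Gval2 q t k c Cc x = 0 ↔
      (gsep2 q n t k c Cc l).IsRoot x := by
    intro x
    rw [IsRoot.def, ← pow_eq_zero_iff (a := eval x _) (n := q ^ (t / 2)) (by positivity),
      ← eval_pow, key]
    simp only [eval_sub, eval_mul, eval_pow, eval_X, eval_C, eval_Gpoly2, mul_comm (x ^ q ^ t)]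
  refine ⟨key.symm, hdeg, hsep, coeff_gsep2_one c Cc l hF0 (by omega) (by omega),
    neg_ne_zero.mpr (pow_ne_zero _ hl), ?_⟩
  calc _ = {p : AlgebraicClosure F0 × AlgebraicClosure F0 |
          (gsep2 q n t k c Cc l).IsRoot p.1 ∧ (gsep2 q n t k c Cc l).IsRoot p.2}.ncard := by
        simp only [hroot]
    _ ≤ (gsep2 q n t k c Cc l).natDegree ^ 2 := ncard_setOf_isRoot_prod_le hsep.ne_zero
    _ = q ^ (2 * k - t) := by rw [hdeg, ← pow_mul]; congr 1; omega

/-- In the setting (case `mindeg_q G = t/2`, `t` even):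
`X^(q^t) G(λ) − λ^(q^t) G(X) = g(X)^(q^(t/2))`, `g` is separable of degree `q^(k−t/2)`
with coefficient of `X` equal to `−λ^(q^(t/2)) ≠ 0`; consequently the set of affine
singular points of the curve `C` has cardinality at most `q^(2k−t)`. -/
theorem stmt_16 (q n t k : ℕ)
    (F0 : Type) [Field F0] [Fintype F0] (hF0 : Fintype.card F0 = q)
    (ht : 0 < t) (hteven : t % 2 = 0) (h2tk : 2 * t < k) (hkn : k < n)
    (δ l Cc : AlgebraicClosure F0) (c : ℕ → AlgebraicClosure F0)
    (hδK : δ ^ q ^ n = δ) (hlK : l ^ q ^ n = l) (hCcK : Cc ^ q ^ n = Cc)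
    (hcK : ∀ i, c i ^ q ^ n = c i)
    (hnorm : δ ^ ((q ^ n - 1) / (q - 1)) ≠ 1) (hCc : Cc ≠ 0)
    (hlq : l ^ q ≠ l)
    (hFl : l + δ * l ^ q ^ (2 * t) ≠ 0) (hGl : Gval2 q t k c Cc l ≠ 0) :
    X ^ q ^ t * C (Gval2 q t k c Cc l) - C (l ^ q ^ t) * Gpoly2 q t k c Cc
        = gsep2 q n t k c Cc l ^ q ^ (t / 2) ∧
    (gsep2 q n t k c Cc l).natDegree = q ^ (k - t / 2) ∧
    (gsep2 q n t k c Cc l).Separable ∧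
    (gsep2 q n t k c Cc l).coeff 1 = -(l ^ q ^ (t / 2)) ∧
    -(l ^ q ^ (t / 2)) ≠ 0 ∧
    Set.ncard {p : AlgebraicClosure F0 × AlgebraicClosure F0 |
        p.1 ^ q ^ t * Gval2 q t k c Cc l - l ^ q ^ t * Gval2 q t k c Cc p.1 = 0 ∧
        p.2 ^ q ^ t * Gval2 q t k c Cc l - l ^ q ^ t * Gval2 q t k c Cc p.2 = 0}
      ≤ q ^ (2 * k - t) :=
  stmt_16_general q n t k F0 hF0 ht hteven h2tk hkn l Cc c hlK hCcK hcK hCc hlq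

end
end
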